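/- Pick an integer t ≥ 0 and positive integers r, v, k, ℓ, and put s := gcd(q−1, v), d := (q−1)/s, and d_0 := d/gcd(d, ℓ−1). Suppose q = q_0^m where m is even, q_0 is a prime power, and q_0 ≡ −1 (mod d). Pick a polynomial ĥ with coefficients in the subfield F_{q_0} of F_q of order q_0, and let h := h_k(x)^t · ĥ(h_ℓ(x)^{d_0}). Then f(x) := x^r · h(x^v) is a permutation polynomial of F_q if and only if gcd(r, s) = 1, gcd(2r + (k−1)tv, 2d) = 2, and h has no roots in μ_d. -/

import Mathlib

/-!
Write `s * d = q - 1` and `v = s * e`. Since `d ∣ q₀ + 1`, the Frobenius `x ↦ x ^ q₀` of the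
subfield of order `q₀` inverts every `η ∈ μ_d` and fixes the coefficients of `ĥ`. From
`h_n(η⁻¹) η ^ (n - 1) = h_n(η)` it follows that `h_ℓ(η) ^ d₀` is Frobenius-fixed and that
`h(η) ^ (q₀ - 1) * η ^ ((k - 1) t) = 1` whenever `h(η) ≠ 0`. As `m` is even, `(q₀ - 1) ∣ s`, so
`f(x) ^ s = x ^ (s M)` on `F_q^×` with `M = r - e (k - 1) t s / (q₀ - 1)`.

On the cyclic group `F_q^×`, a map `x ↦ x ^ r ψ(x)` with `ψ` depending only on `x ^ s` and
with `s`-th power `x ^ (s M)` is injective iff `gcd(r, s) = 1` and `gcd(M, d) = 1`.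
Finally `2r + (k - 1) t v ≡ 2M (mod 2d)`: if `k` is even and `t > 0`, then `h(-1) = 0`, so
non-vanishing on `μ_d` forces `q` and `d` to be odd, and then `(q₀ + 1) / d` is even.
-/

open Polynomial Function Finset

theorem Nat.mul_div_gcd_comm (a b : ℕ) : a * (b / b.gcd a) = b * (a / b.gcd a) := by
  rw [← Nat.mul_div_assoc _ (Nat.gcd_dvd_left b a), mul_comm,
    Nat.mul_div_assoc _ (Nat.gcd_dvd_right b a)]

theorem sub_one_mul_dvd_of_even {q0 m s d j : ℕ} (hm : Even m) (hsd : s * d = q0 ^ m - 1)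
    (hj : q0 + 1 = d * j) (hd : 0 < d) : (q0 - 1) * j ∣ s := by
  obtain ⟨m', rfl⟩ := hm
  have h : q0 ^ 2 - 1 ∣ q0 ^ (m' + m') - 1 := by
    rw [show q0 ^ (m' + m') = (q0 ^ 2) ^ m' by ring]
    exact Nat.sub_one_dvd_pow_sub_one _ _
  rw [← hsd, ← one_pow 2, Nat.sq_sub_sq, hj, mul_comm, mul_comm d j, ← mul_assoc] at h
  exact Nat.dvd_of_mul_dvd_mul_right hd h

theorem Int.gcd_eq_two_iff_of_two_mul_dvd {L M : ℤ} {d : ℕ} (h : 2 * (d : ℤ) ∣ L - 2 * M) :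
    L.gcd (2 * d) = 2 ↔ M.gcd d = 1 := by
  obtain ⟨c, hc⟩ := h
  rw [show L = 2 * M + c * (2 * d) by linear_combination hc, Int.gcd_add_mul_right_left,
    Int.gcd_mul_left]
  simp

theorem injective_pow_mul_of_gcd_eq_one {G : Type*} [CommGroup G] [Finite G] {r s d : ℕ}
    (hsd : Nat.card G = s * d) {ψ : G → G} (hψ : ∀ a b, a ^ s = b ^ s → ψ a = ψ b) {M : ℤ}
    (hpow : ∀ x, (x ^ r * ψ x) ^ s = x ^ ((s : ℤ) * M)) (hrs : r.gcd s = 1) (hMd : M.gcd d = 1) :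
    Injective (fun x => x ^ r * ψ x) := by
  intro a b (hab : a ^ r * ψ a = b ^ r * ψ b)
  have hsM : (a / b) ^ ((s : ℤ) * M) = 1 := by
    rw [div_zpow, ← hpow, ← hpow, hab, div_self']
  have hsd' : (a / b) ^ (s * d) = 1 := hsd ▸ pow_card_eq_one'
  have hs1 : (a / b) ^ s = 1 := by
    rw [← orderOf_dvd_iff_pow_eq_one]
    have := Int.dvd_gcd (orderOf_dvd_iff_zpow_eq_one.2 hsM)
      (orderOf_dvd_iff_zpow_eq_one.2 (by exact_mod_cast hsd' : (a / b) ^ ((s : ℤ) * d) = 1))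
    rwa [Int.gcd_mul_left, hMd, Int.natAbs_natCast, mul_one] at this
  have has : a ^ s = b ^ s := by rwa [div_pow, div_eq_one] at hs1
  have hr1 : (a / b) ^ r = 1 := by
    rw [hψ a b has] at hab
    rw [div_pow, mul_right_cancel hab, div_self']
  rw [← div_eq_one, ← pow_one (a / b), ← hrs, pow_gcd_eq_one.2 ⟨hr1, hs1⟩]

namespace IsCyclic

variable {G : Type*} [CommGroup G] [IsCyclic G] [Finite G]

theorem exists_pow_eq_of_pow_eq_one {v : ℕ} {y : G}
    (hy : y ^ (Nat.card G / (Nat.card G).gcd v) = 1) : ∃ x : G, x ^ v = y := by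
  set n := Nat.card G
  have hdvd : n / n.gcd v ∣ n := Nat.div_dvd_of_dvd (Nat.gcd_dvd_left n v)
  have hle : (powMonoidHom v : G →* G).range ≤ (powMonoidHom (n / n.gcd v)).ker := by
    rintro _ ⟨x, rfl⟩
    rw [MonoidHom.mem_ker, powMonoidHom_apply, powMonoidHom_apply, ← pow_mul,
      Nat.mul_div_gcd_comm, pow_mul, pow_card_eq_one', one_pow]
  have hrange := Subgroup.eq_of_le_of_card_ge hle (by
    rw [IsCyclic.card_powMonoidHom_ker, IsCyclic.card_powMonoidHom_range, Nat.gcd_eq_right hdvd])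
  exact (hrange ▸ hy : y ∈ (powMonoidHom v : G →* G).range)

theorem injective_pow_mul_iff {r s d : ℕ} (hsd : Nat.card G = s * d) {ψ : G → G}
    (hψ : ∀ a b, a ^ s = b ^ s → ψ a = ψ b) {M : ℤ}
    (hpow : ∀ x, (x ^ r * ψ x) ^ s = x ^ ((s : ℤ) * M)) :
    Injective (fun x => x ^ r * ψ x) ↔ r.gcd s = 1 ∧ M.gcd d = 1 := by
  have hn : 0 < Nat.card G := Nat.card_pos
  have hs : 0 < s := Nat.pos_of_mul_pos_right (hsd ▸ hn)
  have hd : 0 < d := Nat.pos_of_mul_pos_left (hsd ▸ hn)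
  refine ⟨fun hinj => ⟨?_, ?_⟩,
    fun ⟨hrs, hMd⟩ => injective_pow_mul_of_gcd_eq_one hsd hψ hpow hrs hMd⟩
  · have hbot : (powMonoidHom (r.gcd s) : G →* G).ker = ⊥ := by
      refine (Subgroup.eq_bot_iff_forall _).2 fun x hx => hinj ?_
      obtain ⟨hxr, hxs⟩ := pow_gcd_eq_one.1 hx
      simp only [hxr, one_pow, one_mul, hψ x 1 (by rw [hxs, one_pow])]
    have := IsCyclic.card_powMonoidHom_ker G (r.gcd s)
    rwa [hbot, Subgroup.card_bot, eq_comm,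
      Nat.gcd_eq_right ((Nat.gcd_dvd_right r s).trans (hsd ▸ dvd_mul_right s d))] at this
  · set g := M.gcd d
    have hmaps : ∀ x : G, x ^ (s * g) = 1 → (x ^ r * ψ x) ^ s = 1 := by
      intro x hx
      rw [hpow, ← orderOf_dvd_iff_zpow_eq_one]
      refine (Int.natCast_dvd_natCast.2 (orderOf_dvd_of_pow_eq_one hx)).trans ?_
      exact_mod_cast mul_dvd_mul_left (s : ℤ) (Int.gcd_dvd_left M d)
    have hgd : g ∣ d := by simpa using Int.gcd_dvd_natAbs_right M d
    have hcard := Nat.card_le_card_of_injective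
      (fun x : (powMonoidHom (s * g) : G →* G).ker =>
        (⟨_, hmaps x x.2⟩ : (powMonoidHom s : G →* G).ker))
      fun x y hxy => Subtype.ext (hinj (congrArg Subtype.val hxy))
    rw [IsCyclic.card_powMonoidHom_ker, IsCyclic.card_powMonoidHom_ker, hsd, Nat.gcd_mul_left,
      Nat.gcd_eq_right hgd, Nat.gcd_eq_right (dvd_mul_right s d)] at hcard
    have hg1 : g ≤ 1 := Nat.le_of_mul_le_mul_left (by rwa [mul_one]) hs
    have hg0 : g ≠ 0 := Int.gcd_ne_zero_right (by exact_mod_cast hd.ne')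
    omega

end IsCyclic

theorem injective_iff_injective_units {M₀ : Type*} [GroupWithZero M₀] {f : M₀ → M₀}
    (hf : ∀ x, f x = 0 ↔ x = 0) {φ : M₀ˣ → M₀ˣ} (hφ : ∀ u, (φ u : M₀) = f u) :
    Injective f ↔ Injective φ := by
  refine ⟨fun hinj u w huw => Units.ext (hinj (by rw [← hφ, ← hφ, huw])), fun hinj a b hab => ?_⟩
  by_cases ha : a = 0
  · rw [ha, eq_comm, ← hf b, ← hab, (hf a).2 ha]
  by_cases hb : b = 0
  · rw [hb, ← hf a, hab, (hf b).2 hb]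
  have := hinj (a₁ := Units.mk0 a ha) (a₂ := Units.mk0 b hb) (Units.ext (by simpa [hφ] using hab))
  simpa using congrArg Units.val this

namespace FiniteField

variable {F : Type*} [Field F] [Fintype F]

theorem bijective_pow_mul_iff {r s d : ℕ} (hr : 0 < r) (hsd : Fintype.card F - 1 = s * d)
    {χ : F → F} {M : ℤ} (hpow : ∀ x : F, x ≠ 0 → (x ^ r * χ (x ^ s)) ^ s = x ^ ((s : ℤ) * M)) :
    Bijective (fun x => x ^ r * χ (x ^ s)) ↔ r.gcd s = 1 ∧ M.gcd d = 1 := by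
  have hs : s ≠ 0 := by
    rintro rfl
    have := Fintype.one_lt_card (α := F)
    omega
  have hχ : ∀ u : Fˣ, χ ((u : F) ^ s) ≠ 0 := fun u h0 => by
    have := hpow u u.ne_zero
    rw [h0, mul_zero, zero_pow hs] at this
    exact zpow_ne_zero _ u.ne_zero this.symm
  set ψ : Fˣ → Fˣ := fun u => Units.mk0 (χ ((u : F) ^ s)) (hχ u)
  rw [← Finite.injective_iff_bijective,
    injective_iff_injective_units (φ := fun u => u ^ r * ψ u) ?_ (fun u => by simp [ψ]),
    IsCyclic.injective_pow_mul_iff (by rw [Nat.card_units, Nat.card_eq_fintype_card, hsd])]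
  · intro a b hab
    ext
    simp only [ψ, Units.val_mk0, ← Units.val_pow_eq_pow_val, hab]
  · intro u
    ext
    simpa [ψ] using hpow u u.ne_zero
  · intro x
    refine ⟨fun h0 => by_contra fun hx => ?_, fun hx => by simp [hx, zero_pow hr.ne']⟩
    have := hpow x hx
    rw [h0, zero_pow hs] at this
    exact zpow_ne_zero _ hx this.symm

theorem exists_pow_eq_of_pow_eq_one {v : ℕ} {η : F}
    (hη : η ^ ((Fintype.card F - 1) / (Fintype.card F - 1).gcd v) = 1) :
    ∃ x : F, x ≠ 0 ∧ x ^ v = η := by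
  have hq : 0 < Fintype.card F - 1 := Nat.sub_pos_of_lt Fintype.one_lt_card
  have hη0 : η ≠ 0 := by
    rintro rfl
    have hn := Nat.div_pos (Nat.gcd_le_left v hq) (Nat.gcd_pos_of_pos_left v hq)
    exact zero_ne_one ((zero_pow hn.ne').symm.trans hη)
  obtain ⟨x, hx⟩ := IsCyclic.exists_pow_eq_of_pow_eq_one (y := Units.mk0 η hη0)
    (v := v) (by ext; simpa [Nat.card_units, Nat.card_eq_fintype_card] using hη)
  exact ⟨x, x.ne_zero, by simpa using congrArg Units.val hx⟩

theorem exists_isPrimitiveRoot_of_dvd {d : ℕ} (hd : d ∣ Fintype.card F - 1) :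
    ∃ ζ : F, IsPrimitiveRoot ζ d := by
  obtain ⟨g, hg⟩ := IsCyclic.exists_ofOrder_eq_natCard (α := Fˣ)
  rw [Nat.card_units, Nat.card_eq_fintype_card] at hg
  have hg0 : orderOf g ≠ 0 := hg ▸ (Nat.sub_pos_of_lt Fintype.one_lt_card).ne'
  refine ⟨(g ^ (orderOf g / d) : Fˣ), IsPrimitiveRoot.coe_units_iff.2 ?_⟩
  simpa only [orderOf_pow_orderOf_div hg0 (hg ▸ hd)] using
    IsPrimitiveRoot.orderOf (g ^ (orderOf g / d))

theorem forall_pow_eq_one_eval_map_ne_zero_iff (L : Type*) [Field L] [Algebra F L] {d : ℕ}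
    (hd : d ∣ Fintype.card F - 1) (p : F[X]) :
    (∀ ζ : L, ζ ^ d = 1 → (p.map (algebraMap F L)).eval ζ ≠ 0) ↔
      ∀ η : F, η ^ d = 1 → p.eval η ≠ 0 := by
  have hd0 : NeZero d := ⟨by
    rintro rfl
    exact (Nat.sub_pos_of_lt Fintype.one_lt_card).ne' (Nat.eq_zero_of_zero_dvd hd)⟩
  have heval (η : F) :
      (p.map (algebraMap F L)).eval (algebraMap F L η) = algebraMap F L (p.eval η) := by
    rw [eval_map, eval₂_at_apply]
  refine ⟨fun H η hη h0 => ?_, fun H ζ hζ => ?_⟩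
  · exact H _ (by rw [← map_pow (algebraMap F L), hη, map_one]) (by rw [heval, h0, map_zero])
  obtain ⟨ζ₀, hζ₀⟩ := exists_isPrimitiveRoot_of_dvd hd
  obtain ⟨i, -, rfl⟩ :=
    (hζ₀.map_of_injective (algebraMap F L).injective).eq_pow_of_pow_eq_one hζ
  rw [← map_pow, heval, _root_.map_ne_zero]
  exact H _ (by rw [← pow_mul, mul_comm, pow_mul, hζ₀.pow_eq_one, one_pow])

end FiniteField

theorem map_geom_sum_mul_pow {R : Type*} [CommSemiring R] (σ : R →+* R) {η : R}
    (hσ : σ η * η = 1) (n : ℕ) :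
    σ (∑ i ∈ range n, η ^ i) * η ^ (n - 1) = ∑ i ∈ range n, η ^ i := by
  rw [map_sum, sum_mul, ← sum_range_reflect (fun i => η ^ i) n]
  refine sum_congr rfl fun i hi => ?_
  have hi : i ≤ n - 1 := Nat.le_sub_one_of_lt (mem_range.1 hi)
  calc σ (η ^ i) * η ^ (n - 1) = (σ η * η) ^ i * η ^ (n - 1 - i) := by
        rw [map_pow, ← pow_sub_mul_pow η hi]; ring
    _ = η ^ (n - 1 - i) := by rw [hσ, one_pow, one_mul]

theorem Polynomial.map_eval_of_map_coeff {R : Type*} [CommSemiring R] (σ : R →+* R) {p : R[X]}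
    (hp : ∀ i, σ (p.coeff i) = p.coeff i) (x : R) : σ (p.eval x) = p.eval (σ x) := by
  rw [← eval₂_at_apply, ← eval_map]
  congr
  ext i
  rw [coeff_map, hp]

theorem map_eval_mul_pow_eq_eval {R : Type*} [CommSemiring R] (σ : R →+* R) {hhat h : R[X]}
    (hcoeff : ∀ i, σ (hhat.coeff i) = hhat.coeff i) {k t ℓ d0 : ℕ}
    (hh : h = (∑ i ∈ range k, X ^ i) ^ t * hhat.comp ((∑ i ∈ range ℓ, X ^ i) ^ d0))
    {η : R} (hσ : σ η * η = 1) (hℓ : η ^ ((ℓ - 1) * d0) = 1) :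
    σ (h.eval η) * η ^ ((k - 1) * t) = h.eval η := by
  have hu : σ ((∑ i ∈ range ℓ, η ^ i) ^ d0) = (∑ i ∈ range ℓ, η ^ i) ^ d0 := by
    conv_rhs => rw [← map_geom_sum_mul_pow σ hσ ℓ]
    rw [map_pow, mul_pow, ← pow_mul, hℓ, mul_one]
  simp only [hh, eval_mul, eval_pow, eval_geom_sum, eval_comp, map_mul, map_pow,
    map_eval_of_map_coeff σ hcoeff, hu]
  conv_rhs => rw [← map_geom_sum_mul_pow σ hσ k]
  ring

theorem eval_pow_sub_one_mul_pow_eq_one {F : Type*} [Field F] (K : Subfield F) [Fintype K]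
    {hhat h : F[X]} (hcoeff : ∀ i, hhat.coeff i ∈ K) {k t ℓ d0 : ℕ}
    (hh : h = (∑ i ∈ range k, X ^ i) ^ t * hhat.comp ((∑ i ∈ range ℓ, X ^ i) ^ d0))
    {η : F} (hη : η ^ (Fintype.card K + 1) = 1) (hℓ : η ^ ((ℓ - 1) * d0) = 1)
    (hne : h.eval η ≠ 0) :
    h.eval η ^ (Fintype.card K - 1) * η ^ ((k - 1) * t) = 1 := by
  set σ : F →+* F := (FiniteField.frobeniusAlgHom K F).toRingHom
  have hσ : ∀ x, σ x = x ^ Fintype.card K := fun x => rfl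
  have hfix := map_eval_mul_pow_eq_eval σ
    (fun i => (FiniteField.frobeniusAlgHom K F).commutes ⟨_, hcoeff i⟩) hh
    (by rw [hσ, ← pow_succ, hη]) hℓ
  rw [hσ, ← pow_sub_one_mul Fintype.card_ne_zero] at hfix
  refine mul_right_cancel₀ hne ?_
  linear_combination hfix

theorem pow_mul_eval_pow_pow_eq_zpow {F : Type*} [Field F] [Fintype F] (K : Subfield F)
    [Fintype K] {hhat h : F[X]} (hcoeff : ∀ i, hhat.coeff i ∈ K) {k t ℓ d0 : ℕ}
    (hh : h = (∑ i ∈ range k, X ^ i) ^ t * hhat.comp ((∑ i ∈ range ℓ, X ^ i) ^ d0))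
    {r s d e j N : ℕ} (hj : Fintype.card K + 1 = d * j) (hs : s = (Fintype.card K - 1) * j * N)
    (hsd : s * d = Fintype.card F - 1) (hℓ : d ∣ (ℓ - 1) * d0)
    (hnv : ∀ η : F, η ^ d = 1 → h.eval η ≠ 0) (x : F) (hx : x ≠ 0) :
    (x ^ r * h.eval ((x ^ s) ^ e)) ^ s =
      x ^ ((s : ℤ) * ((r : ℤ) - ((k - 1) * t * j * N * e : ℕ))) := by
  have hd : ((x ^ s) ^ e) ^ d = 1 := by
    rw [← pow_mul, ← pow_mul, show s * (e * d) = s * d * e by ring, pow_mul, hsd,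
      FiniteField.pow_card_sub_one_eq_one x hx, one_pow]
  have hkey := eval_pow_sub_one_mul_pow_eq_one K hcoeff hh
    (by rw [hj, pow_mul, hd, one_pow]) (by obtain ⟨c, hc⟩ := hℓ; rw [hc, pow_mul, hd, one_pow])
    (hnv _ hd)
  have hexp : (s : ℤ) * ((r : ℤ) - ((k - 1) * t * j * N * e : ℕ)) =
      ((s * r : ℕ) : ℤ) - ((s * ((k - 1) * t * j * N * e) : ℕ) : ℤ) := by
    push_cast; ring
  rw [hexp, zpow_sub₀ hx, zpow_natCast, zpow_natCast, eq_div_iff (pow_ne_zero _ hx)]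
  calc (x ^ r * h.eval ((x ^ s) ^ e)) ^ s * x ^ (s * ((k - 1) * t * j * N * e))
      = x ^ (s * r) * (h.eval ((x ^ s) ^ e) ^ (Fintype.card K - 1) *
          ((x ^ s) ^ e) ^ ((k - 1) * t)) ^ (j * N) := by
        rw [hs]; ring
    _ = x ^ (s * r) := by rw [hkey, one_pow, mul_one]

theorem FiniteField.even_sub_one_mul_mul {F : Type*} [Field F] [Fintype F] {q0 m k t d j : ℕ}
    (hq : Fintype.card F = q0 ^ m) (hj : q0 + 1 = d * j)
    (hz : ∀ η : F, η ^ d = 1 → (∑ i ∈ range k, η ^ i) ^ t ≠ 0) :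
    Even ((k - 1) * t * j) := by
  rcases Nat.even_or_odd (k - 1) with hk | hk
  · exact (hk.mul_right t).mul_right j
  rcases Nat.eq_zero_or_pos t with rfl | ht
  · simp
  have hk : Even k := by
    have := hk.pos
    simpa [Nat.sub_add_cancel (by omega : 1 ≤ k)] using hk.add_one
  have hneg : (-1 : F) ^ d ≠ 1 := fun h1 =>
    hz (-1) h1 (by rw [neg_one_geom_sum, if_pos hk, zero_pow ht.ne'])
  have hd : ¬ Even d := fun he => hneg he.neg_one_pow
  have hchar : ringChar F ≠ 2 := fun h2 => hneg (by rw [neg_one_eq_one_iff.2 h2, one_pow])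
  have hq0 : ¬ Even q0 := fun he => by
    have hm : m ≠ 0 := by
      rintro rfl
      exact Fintype.one_lt_card.ne' (hq.trans (pow_zero q0))
    have := FiniteField.odd_card_of_char_ne_two hchar
    rw [hq, Nat.odd_iff.symm] at this
    exact Nat.not_even_iff_odd.2 this (Nat.even_pow.2 ⟨he, hm⟩)
  have hj : Even j := by
    have : Even (d * j) := hj ▸ (Nat.not_even_iff_odd.1 hq0).add_one
    exact (Nat.even_mul.1 this).resolve_left hd
  exact hj.mul_left _

theorem gcd_two_mul_add_eq_two_iff {r k t s e d j N q0 : ℕ} (hq0 : 1 ≤ q0)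
    (hj : q0 + 1 = d * j) (hs : s = (q0 - 1) * j * N) (hpar : Even ((k - 1) * t * j)) :
    Nat.gcd (2 * r + (k - 1) * t * (s * e)) (2 * d) = 2 ↔
      Int.gcd ((r : ℤ) - ((k - 1) * t * j * N * e : ℕ)) d = 1 := by
  rw [← Int.gcd_natCast_natCast]
  refine Int.gcd_eq_two_iff_of_two_mul_dvd ?_
  obtain ⟨a, ha⟩ := hpar
  refine ⟨a * e * N * j, ?_⟩
  zify [hq0] at hj hs ha
  push_cast [hs]
  linear_combination ((k - 1 : ℕ) * t * e * N * j : ℤ) * hj + (e * N * d * j : ℤ) * ha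

theorem stmt_4_general {F : Type*} [Field F] [Fintype F] {q q0 m : ℕ}
    (hq : Fintype.card F = q) (t : ℕ) {r v k ℓ : ℕ}
    (hr : 0 < r)
    (s d d0 : ℕ) (hs : s = Nat.gcd (q - 1) v) (hd : d = (q - 1) / s)
    (hd0 : d0 = d / Nat.gcd d (ℓ - 1))
    (hqm : q = q0 ^ m) (hme : Even m) (hcong : d ∣ q0 + 1)
    (K : Subfield F) (hK : Nat.card K = q0)
    (hhat : F[X]) (hcoeff : ∀ i, hhat.coeff i ∈ K)
    (h : F[X]) (hh : h = (∑ i ∈ Finset.range k, X ^ i) ^ t *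
      hhat.comp ((∑ i ∈ Finset.range ℓ, X ^ i) ^ d0)) :
    Function.Bijective (fun c : F => (X ^ r * h.comp (X ^ v)).eval c) ↔
      (Nat.gcd r s = 1 ∧ Nat.gcd (2 * r + (k - 1) * t * v) (2 * d) = 2 ∧
        ∀ ζ : AlgebraicClosure F, ζ ^ d = 1 →
          (h.map (algebraMap F (AlgebraicClosure F))).eval ζ ≠ 0) := by
  classical
  subst hq
  have hsd : s * d = Fintype.card F - 1 := by
    rw [hd, hs, Nat.mul_div_cancel' (Nat.gcd_dvd_left _ _)]
  have hdpos : 0 < d := Nat.pos_of_ne_zero fun h0 => by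
    have := Fintype.one_lt_card (α := F)
    rw [h0, mul_zero] at hsd; omega
  have hKq : Fintype.card K = q0 := Nat.card_eq_fintype_card.symm.trans hK
  obtain ⟨j, hj⟩ := hcong
  obtain ⟨N, hN⟩ := sub_one_mul_dvd_of_even hme (hqm ▸ hsd) hj hdpos
  obtain ⟨e, rfl⟩ : s ∣ v := hs ▸ Nat.gcd_dvd_right _ _
  have hdℓ : d ∣ (ℓ - 1) * d0 := ⟨_, hd0 ▸ Nat.mul_div_gcd_comm (ℓ - 1) d⟩
  have hcrit (hnv : ∀ η : F, η ^ d = 1 → h.eval η ≠ 0) := FiniteField.bijective_pow_mul_iff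
    (χ := fun y => h.eval (y ^ e)) hr hsd.symm
    (pow_mul_eval_pow_pow_eq_zpow K hcoeff hh (hKq ▸ hj) (hKq ▸ hN) hsd hdℓ hnv)
  have hgcd (hnv : ∀ η : F, η ^ d = 1 → h.eval η ≠ 0) :=
    gcd_two_mul_add_eq_two_iff (r := r) (k := k) (t := t) (e := e) (hK ▸ Nat.card_pos) hj hN
      (FiniteField.even_sub_one_mul_mul hqm hj fun η hη => left_ne_zero_of_mul (by
        simpa only [hh, eval_mul, eval_pow, eval_geom_sum, eval_comp] using hnv η hη))
  simp only [eval_mul, eval_pow, eval_X, eval_comp, pow_mul]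
  rw [FiniteField.forall_pow_eq_one_eval_map_ne_zero_iff _ (hsd ▸ dvd_mul_left d s)]
  refine ⟨fun hbij => ?_, fun ⟨hrs, hrd, hnv⟩ => (hcrit hnv).2 ⟨hrs, (hgcd hnv).1 hrd⟩⟩
  have hnv : ∀ η : F, η ^ d = 1 → h.eval η ≠ 0 := fun η hη => by
    obtain ⟨x, hx, rfl⟩ := FiniteField.exists_pow_eq_of_pow_eq_one (v := s * e)
      (by rwa [← hs, ← hd])
    refine fun h0 => hbij.1.ne hx ?_
    simp only [← pow_mul, h0, zero_pow hr.ne', mul_zero, zero_mul]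
  obtain ⟨hrs, hrd⟩ := (hcrit hnv).1 hbij
  exact ⟨hrs, (hgcd hnv).2 hrd, hnv⟩

/-- Pick t ≥ 0 and r, v, k, ℓ > 0; put s := gcd(q−1, v), d := (q−1)/s,
d_0 := d/gcd(d, ℓ−1). Suppose q = q_0^m with m even, q_0 a prime power,
q_0 ≡ −1 (mod d). Pick hhat with coefficients in the subfield of order q_0, and let
h := h_k^t · hhat(h_ℓ^{d_0}). Then f := x^r h(x^v) permutes F_q iff gcd(r, s) = 1,
gcd(2r + (k−1)tv, 2d) = 2, and h has no roots in μ_d. -/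
theorem stmt_4 {F : Type*} [Field F] [Fintype F] {q q0 m : ℕ}
    (hq : Fintype.card F = q) (t : ℕ) {r v k ℓ : ℕ}
    (hr : 0 < r) (hv : 0 < v) (hk : 0 < k) (hl : 0 < ℓ)
    (s d d0 : ℕ) (hs : s = Nat.gcd (q - 1) v) (hd : d = (q - 1) / s)
    (hd0 : d0 = d / Nat.gcd d (ℓ - 1))
    (hq0 : IsPrimePow q0) (hqm : q = q0 ^ m) (hme : Even m) (hcong : d ∣ q0 + 1)
    (K : Subfield F) (hK : Nat.card K = q0)
    (hhat : F[X]) (hcoeff : ∀ i, hhat.coeff i ∈ K)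
    (h : F[X]) (hh : h = (∑ i ∈ Finset.range k, X ^ i) ^ t *
      hhat.comp ((∑ i ∈ Finset.range ℓ, X ^ i) ^ d0)) :
    Function.Bijective (fun c : F => (X ^ r * h.comp (X ^ v)).eval c) ↔
      (Nat.gcd r s = 1 ∧ Nat.gcd (2 * r + (k - 1) * t * v) (2 * d) = 2 ∧
        ∀ ζ : AlgebraicClosure F, ζ ^ d = 1 →
          (h.map (algebraMap F (AlgebraicClosure F))).eval ζ ≠ 0) :=
  stmt_4_general hq t hr s d d0 hs hd hd0 hqm hme hcong K hK hhat hcoeff h hh
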